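/- Let T1, T2, T3, T4, T5 be the continuous ℚ-algebra endomorphisms of R = ℚ[[x,y]] determined by the substitutions T1 : x ↦ x(1+y)⁻¹, y ↦ y; T2 : x ↦ x, y ↦ y(1+x)⁻¹; T3 : x ↦ x(1+y), y ↦ y; T4 : x ↦ x, y ↦ y(1+x); T5 : x ↦ x(1+xy)⁻¹, y ↦ y(1+xy). Then the composite T5 ∘ T4 ∘ T3 ∘ T2 ∘ T1 is the identity map of R; equivalently, it fixes both x and y. -/

import Mathlib

/-!
A continuous `ℚ`-algebra endomorphism of `ℚ[[x,y]]` is determined by the images of `x` and `y`,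
because polynomials are dense for the coefficientwise topology. So it suffices to follow `x` and
`y` through the five substitutions, which take
`x ↦ x(1+y)⁻¹ ↦ x(1+x)(1+x+y)⁻¹ ↦ x(1+x+xy)(1+x)⁻¹ ↦ x(1+xy) ↦ x` and
`y ↦ y ↦ y(1+x)⁻¹ ↦ y(1+x+xy)⁻¹ ↦ y(1+xy)⁻¹ ↦ y`.
-/

noncomputable section

namespace ScatteringWallCrossing

/-- `R = ℚ[[x,y]]`, formal power series in two variables over `ℚ`. -/
abbrev R : Type := MvPowerSeries (Fin 2) ℚ

/-- The variable `x`. -/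
def x : R := MvPowerSeries.X 0

/-- The variable `y`. -/
def y : R := MvPowerSeries.X 1

/-- The coefficientwise topology on `ℚ[[x,y]]`: the product topology on
`((Fin 2) →₀ ℕ) → ℚ` with `ℚ` discrete.  A substitution endomorphism is the unique
*continuous* `ℚ`-algebra endomorphism with the prescribed values on `x` and `y`. -/
def coeffTopology : TopologicalSpace R :=
  @Pi.topologicalSpace ((Fin 2) →₀ ℕ) (fun _ => ℚ) (fun _ => ⊥)

/-- `T` is a continuous `ℚ`-algebra endomorphism of `R` (for the coefficientwise
topology) sending `x ↦ u` and `y ↦ v`; i.e. `T` is the substitution endomorphism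
determined by `x ↦ u`, `y ↦ v`. -/
def IsSubstEndo (T : R →ₐ[ℚ] R) (u v : R) : Prop :=
  @Continuous R R coeffTopology coeffTopology T ∧ T x = u ∧ T y = v

end ScatteringWallCrossing

namespace MvPowerSeries

variable {σ τ k : Type*} [Field k]

theorem inv_eq_of_mul_eq_one {φ ψ : MvPowerSeries σ k} (h : φ * ψ = 1) : φ⁻¹ = ψ := by
  have hφ : constantCoeff φ ≠ 0 := left_ne_zero_of_mul_eq_one (by rw [← map_mul, h, map_one])
  rw [MvPowerSeries.inv_eq_iff_mul_eq_one hφ, mul_comm, h]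

theorem map_inv_of_constantCoeff_ne_zero {F : Type*}
    [FunLike F (MvPowerSeries σ k) (MvPowerSeries τ k)]
    [RingHomClass F (MvPowerSeries σ k) (MvPowerSeries τ k)] (f : F)
    {φ : MvPowerSeries σ k} (hφ : constantCoeff φ ≠ 0) : f φ⁻¹ = (f φ)⁻¹ :=
  (inv_eq_of_mul_eq_one (by rw [← map_mul, φ.mul_inv_cancel hφ, map_one])).symm

namespace WithPiTopology
open scoped MvPowerSeries.WithPiTopology

theorem algHom_ext_of_continuous {A S : Type*} [CommSemiring A] [TopologicalSpace A]
    [Semiring S] [Algebra A S] [TopologicalSpace S] [T2Space S]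
    {f g : MvPowerSeries σ A →ₐ[A] S} (hf : Continuous f) (hg : Continuous g)
    (h : ∀ i, f (X i) = g (X i)) : f = g := by
  have hpoly : f.comp (MvPolynomial.coeToMvPowerSeries.algHom A) =
      g.comp (MvPolynomial.coeToMvPowerSeries.algHom A) :=
    MvPolynomial.algHom_ext fun i => by simpa using h i
  refine DFunLike.coe_injective (hf.ext_on denseRange_toMvPowerSeries hg ?_)
  rintro _ ⟨p, rfl⟩
  simpa using congr($hpoly p)

end WithPiTopology
end MvPowerSeries

namespace ScatteringWallCrossing

open MvPowerSeries

@[simp] lemma constantCoeff_x : constantCoeff x = 0 := constantCoeff_X 0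

@[simp] lemma constantCoeff_y : constantCoeff y = 0 := constantCoeff_X 1

section

variable {T : R →ₐ[ℚ] R}

lemma wall₂_apply (hx : T x = x) (hy : T y = y * (1 + x)⁻¹) :
    T (x * (1 + y)⁻¹) = x * ((1 + x) * (1 + x + y)⁻¹) := by
  rw [map_mul, map_inv_of_constantCoeff_ne_zero T (by simp), map_add, map_one, hx, hy]
  congr 1
  apply inv_eq_of_mul_eq_one
  linear_combination (y * (1 + x + y)⁻¹) * (1 + x).mul_inv_cancel (by simp) +
    (1 + x + y).mul_inv_cancel (by simp)

lemma wall₃_apply_x (hx : T x = x * (1 + y)) (hy : T y = y) :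
    T (x * ((1 + x) * (1 + x + y)⁻¹)) = x * ((1 + x + x * y) * (1 + x)⁻¹) := by
  have h : T (1 + x + y) = (1 + x) * (1 + y) := by
    rw [map_add, map_add, map_one, hx, hy]; ring
  rw [map_mul, map_mul, map_inv_of_constantCoeff_ne_zero T (by simp), h, MvPowerSeries.mul_inv_rev,
    map_add, map_one, hx]
  linear_combination (x * (1 + x + x * y) * (1 + x)⁻¹) * (1 + y).mul_inv_cancel (by simp)

lemma wall₃_apply_y (hx : T x = x * (1 + y)) (hy : T y = y) :
    T (y * (1 + x)⁻¹) = y * (1 + x + x * y)⁻¹ := by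
  rw [map_mul, map_inv_of_constantCoeff_ne_zero T (by simp), map_add, map_one, hx, hy]
  congr 2
  ring

lemma wall₄_apply_x (hx : T x = x) (hy : T y = y * (1 + x)) :
    T (x * ((1 + x + x * y) * (1 + x)⁻¹)) = x * (1 + x * y) := by
  rw [map_mul, map_mul, map_inv_of_constantCoeff_ne_zero T (by simp)]
  simp only [map_add, map_one, map_mul, hx, hy]
  linear_combination (x * (1 + x * y)) * (1 + x).mul_inv_cancel (by simp)

lemma wall₄_apply_y (hx : T x = x) (hy : T y = y * (1 + x)) :
    T (y * (1 + x + x * y)⁻¹) = y * (1 + x * y)⁻¹ := by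
  have h : T (1 + x + x * y) = (1 + x * y) * (1 + x) := by
    rw [map_add, map_add, map_one, map_mul, hx, hy]; ring
  rw [map_mul, map_inv_of_constantCoeff_ne_zero T (by simp), h, MvPowerSeries.mul_inv_rev, hy]
  linear_combination (y * (1 + x * y)⁻¹) * (1 + x).mul_inv_cancel (by simp)

lemma wall₅_apply_one_add_xy (hx : T x = x * (1 + x * y)⁻¹) (hy : T y = y * (1 + x * y)) :
    T (1 + x * y) = 1 + x * y := by
  rw [map_add, map_one, map_mul, hx, hy]
  linear_combination (x * y) * (1 + x * y).mul_inv_cancel (by simp)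

lemma wall₅_apply_x (hx : T x = x * (1 + x * y)⁻¹) (hy : T y = y * (1 + x * y)) :
    T (x * (1 + x * y)) = x := by
  rw [map_mul, wall₅_apply_one_add_xy hx hy, hx]
  linear_combination x * (1 + x * y).mul_inv_cancel (by simp)

lemma wall₅_apply_y (hx : T x = x * (1 + x * y)⁻¹) (hy : T y = y * (1 + x * y)) :
    T (y * (1 + x * y)⁻¹) = y := by
  rw [map_mul, map_inv_of_constantCoeff_ne_zero T (by simp), wall₅_apply_one_add_xy hx hy, hy]
  linear_combination y * (1 + x * y).mul_inv_cancel (by simp)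

end

open scoped WithPiTopology in
lemma eq_id_of_continuous {T : R →ₐ[ℚ] R} (hT : @Continuous R R coeffTopology coeffTopology T)
    (hx : T x = x) (hy : T y = y) : T = AlgHom.id ℚ R := by
  let : TopologicalSpace ℚ := ⊥
  have : DiscreteTopology ℚ := ⟨rfl⟩
  refine WithPiTopology.algHom_ext_of_continuous (S := R) hT continuous_id fun i => ?_
  fin_cases i
  exacts [hx, hy]

/-- Let `T1, …, T5` be the continuous substitution endomorphisms of
`ℚ[[x,y]]` given by `T1 : x ↦ x(1+y)⁻¹, y ↦ y`; `T2 : x ↦ x, y ↦ y(1+x)⁻¹`;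
`T3 : x ↦ x(1+y), y ↦ y`; `T4 : x ↦ x, y ↦ y(1+x)`; `T5 : x ↦ x(1+xy)⁻¹, y ↦ y(1+xy)`.
Then `T5 ∘ T4 ∘ T3 ∘ T2 ∘ T1` is the identity map of `R`; equivalently it fixes both `x`
and `y`.  This is the consistency of the scattering diagram with five rays: `(±1,0)`
carrying `1+x`, `(0,±1)` carrying `1+y`, and the outgoing ray through `(-1,-1)`
carrying `1+xy`. -/
theorem consistency_five_walls (T1 T2 T3 T4 T5 : R →ₐ[ℚ] R)
    (hT1 : IsSubstEndo T1 (x * (1 + y)⁻¹) y)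
    (hT2 : IsSubstEndo T2 x (y * (1 + x)⁻¹))
    (hT3 : IsSubstEndo T3 (x * (1 + y)) y)
    (hT4 : IsSubstEndo T4 x (y * (1 + x)))
    (hT5 : IsSubstEndo T5 (x * (1 + x * y)⁻¹) (y * (1 + x * y))) :
    T5.comp (T4.comp (T3.comp (T2.comp T1))) = AlgHom.id ℚ R ∧
      (T5.comp (T4.comp (T3.comp (T2.comp T1)))) x = x ∧
      (T5.comp (T4.comp (T3.comp (T2.comp T1)))) y = y := by
  obtain ⟨hc1, h1x, h1y⟩ := hT1
  obtain ⟨hc2, h2x, h2y⟩ := hT2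
  obtain ⟨hc3, h3x, h3y⟩ := hT3
  obtain ⟨hc4, h4x, h4y⟩ := hT4
  obtain ⟨hc5, h5x, h5y⟩ := hT5
  have hx : (T5.comp (T4.comp (T3.comp (T2.comp T1)))) x = x := by
    simp only [AlgHom.comp_apply]
    rw [h1x, wall₂_apply h2x h2y, wall₃_apply_x h3x h3y, wall₄_apply_x h4x h4y,
      wall₅_apply_x h5x h5y]
  have hy : (T5.comp (T4.comp (T3.comp (T2.comp T1)))) y = y := by
    simp only [AlgHom.comp_apply]
    rw [h1y, h2y, wall₃_apply_y h3x h3y, wall₄_apply_y h4x h4y, wall₅_apply_y h5x h5y]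
  let := coeffTopology
  exact ⟨eq_id_of_continuous (hc5.comp (hc4.comp (hc3.comp (hc2.comp hc1)))) hx hy, hx, hy⟩

end ScatteringWallCrossing
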